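/- Let φ = (1+√5)/2 and V(x,y,z) = (φ²x² − y²)(φ²y² − z²)(φ²z² − x²). A point (x,y,z) with x² + y² + z² = 1 satisfies V(x,y,z) = −(2+√5)/5 if and only if (x,y,z) belongs to the following set of exactly 12 points: (±φ, ±1, 0)/√(φ²+1), (0, ±φ, ±1)/√(φ²+1), (±1, 0, ±φ)/√(φ²+1), with independent signs. These are the centres of the 12 spherical pentagons cut out on the unit sphere by the six planes φ²x² = y², φ²y² = z², φ²z² = x². -/
import Mathlib


/-- The golden ratio. -/
noncomputable def φ : ℝ := (1 + Real.sqrt 5) / 2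

/-- The degree-6 invariant of the icosahedral group. -/
noncomputable def V (x y z : ℝ) : ℝ :=
  (φ ^ 2 * x ^ 2 - y ^ 2) * (φ ^ 2 * y ^ 2 - z ^ 2) * (φ ^ 2 * z ^ 2 - x ^ 2)

/-- The 12 centres of the spherical pentagons: the points `(±φ, ±1, 0)/√(φ²+1)`,
`(0, ±φ, ±1)/√(φ²+1)`, `(±1, 0, ±φ)/√(φ²+1)` with independent signs. -/
noncomputable def pentagonCentres : Set (ℝ × ℝ × ℝ) :=
  { (φ/Real.sqrt (φ^2 + 1), 1/Real.sqrt (φ^2 + 1), 0),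
    (φ/Real.sqrt (φ^2 + 1), -(1/Real.sqrt (φ^2 + 1)), 0),
    (-(φ/Real.sqrt (φ^2 + 1)), 1/Real.sqrt (φ^2 + 1), 0),
    (-(φ/Real.sqrt (φ^2 + 1)), -(1/Real.sqrt (φ^2 + 1)), 0),
    (0, φ/Real.sqrt (φ^2 + 1), 1/Real.sqrt (φ^2 + 1)),
    (0, φ/Real.sqrt (φ^2 + 1), -(1/Real.sqrt (φ^2 + 1))),
    (0, -(φ/Real.sqrt (φ^2 + 1)), 1/Real.sqrt (φ^2 + 1)),
    (0, -(φ/Real.sqrt (φ^2 + 1)), -(1/Real.sqrt (φ^2 + 1))),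
    (1/Real.sqrt (φ^2 + 1), 0, φ/Real.sqrt (φ^2 + 1)),
    (1/Real.sqrt (φ^2 + 1), 0, -(φ/Real.sqrt (φ^2 + 1))),
    (-(1/Real.sqrt (φ^2 + 1)), 0, φ/Real.sqrt (φ^2 + 1)),
    (-(1/Real.sqrt (φ^2 + 1)), 0, -(φ/Real.sqrt (φ^2 + 1))) }

lemma sqrt5_sq : Real.sqrt 5 ^ 2 = 5 := Real.sq_sqrt (by norm_num)

lemma sqrt5_ge : (2:ℝ) ≤ Real.sqrt 5 := by
  nlinarith [sqrt5_sq, Real.sqrt_nonneg 5]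

lemma phi_sq : φ ^ 2 = φ + 1 := by
  unfold φ; nlinarith [sqrt5_sq]

lemma phi_ge : (3/2 : ℝ) ≤ φ := by
  unfold φ; nlinarith [sqrt5_ge]

lemma phi_cube : 2 * φ + 1 = 2 + Real.sqrt 5 := by unfold φ; ring

/-- The key SOS-type identity. -/
lemma key (x y z : ℝ) :
    5 * V x y z + (2 * φ + 1) * (x^2 + y^2 + z^2)^3
      = (φ - 1) * ( x^2 * (φ^2*x^2 - φ^4*y^2 - z^2)^2
          + y^2 * (-x^2 + φ^2*y^2 - φ^4*z^2)^2
          + z^2 * (-(φ^4*x^2) - y^2 + φ^2*z^2)^2 )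
        + (40*φ + 20) * (x^2*y^2*z^2) := by
  have hp := phi_sq
  unfold V
  linear_combination ((-1)*z^6 + (-3)*y^2*z^4 + (-4)*y^4*z^2 + (-1)*y^6 + (-4)*x^2*z^4 + (19)*x^2*y^2*z^2 + (-3)*x^2*y^4 + (-3)*x^4*z^2 + (-4)*x^4*y^2 + (-1)*x^6 + (-1)*φ*z^6 + (-3)*φ*y^2*z^4 + (-1)*φ*y^4*z^2 + (-1)*φ*y^6 + (-1)*φ*x^2*z^4 + (9)*φ*x^2*y^2*z^2 + (-3)*φ*x^2*y^4 + (-3)*φ*x^4*z^2 + (-1)*φ*x^4*y^2 + (-1)*φ*x^6 + (-3)*φ^2*y^2*z^4 + (-3)*φ^2*y^4*z^2 + (-3)*φ^2*x^2*z^4 + (10)*φ^2*x^2*y^2*z^2 + (-3)*φ^2*x^2*y^4 + (-3)*φ^2*x^4*z^2 + (-3)*φ^2*x^4*y^2 + (-1)*φ^3*z^6 + (-2)*φ^3*y^2*z^4 + (2)*φ^3*y^4*z^2 + (-1)*φ^3*y^6 + (2)*φ^3*x^2*z^4 + (-1)*φ^3*x^2*y^2*z^2 + (-2)*φ^3*x^2*y^4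 + (-2)*φ^3*x^4*z^2 + (2)*φ^3*x^4*y^2 + (-1)*φ^3*x^6 + (-1)*φ^4*y^2*z^4 + (5)*φ^4*x^2*y^2*z^2 + (-1)*φ^4*x^2*y^4 + (-1)*φ^4*x^4*z^2 + (-1)*φ^5*y^2*z^4 + (2)*φ^5*y^4*z^2 + (2)*φ^5*x^2*z^4 + (-1)*φ^5*x^2*y^4 + (-1)*φ^5*x^4*z^2 + (2)*φ^5*x^4*y^2 + (-1)*φ^7*y^2*z^4 + (-1)*φ^7*x^2*y^4 + (-1)*φ^7*x^4*z^2) * hp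

lemma Vcyc (x y z : ℝ) : V x y z = V y z x := by unfold V; ring

lemma Vneg1 (x y z : ℝ) : V (-x) y z = V x y z := by unfold V; ring
lemma Vneg2 (x y z : ℝ) : V x (-y) z = V x y z := by unfold V; ring
lemma Vneg3 (x y z : ℝ) : V x y (-z) = V x y z := by unfold V; ring

lemma sqrt_t_sq : (Real.sqrt (φ^2+1))^2 = φ^2 + 1 :=
  Real.sq_sqrt (by positivity)

lemma sqrt_t_pos : 0 < Real.sqrt (φ^2+1) :=
  Real.sqrt_pos.2 (by positivity)

lemma Vbase : V (φ/Real.sqrt (φ^2+1)) (1/Real.sqrt (φ^2+1)) 0 = -((2 + Real.sqrt 5)/5) := by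
  have hp := phi_sq
  have ht := sqrt_t_sq
  have h0 := sqrt_t_pos.ne'
  have key2 : 5*(φ^4*(φ^4-1)) = (2*φ+1)*(φ^2+1)^3 := by
    linear_combination (1 + φ + 3*φ^2 + 4*φ^3 + 7*φ^4 + 3*φ^5 + 5*φ^6) * hp
  have htne : (φ^2+1:ℝ) ≠ 0 := by positivity
  rw [← phi_cube]
  unfold V
  rw [div_pow, div_pow, ht, one_pow]
  field_simp
  linear_combination (φ^2+1)^3 * key2 + (-2 - 2*φ - 9*φ^2 - 11*φ^3 - 26*φ^4 - 21*φ^5 - 41*φ^6 - 22*φ^7 - 39*φ^8 - 13*φ^9 - 22*φ^10 - 3*φ^11 - 5*φ^12) * hp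

lemma split4 (p q P1 P2 P3 P4 : ℝ) (hp : 0 < p) (hq : 0 < q)
    (h1 : 0 ≤ P1) (h2 : 0 ≤ P2) (h3 : 0 ≤ P3) (h4 : 0 ≤ P4)
    (h0 : p*(P1+P2+P3) + q*P4 = 0) : P1 = 0 ∧ P2 = 0 ∧ P3 = 0 ∧ P4 = 0 := by
  have m1 := mul_nonneg hp.le h1
  have m2 := mul_nonneg hp.le h2
  have m3 := mul_nonneg hp.le h3
  have m4 := mul_nonneg hq.le h4
  have h0' : p*P1 + p*P2 + p*P3 + q*P4 = 0 := by linear_combination h0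
  have e1 : P1 ≤ 0 := le_of_mul_le_mul_left (by nlinarith [m2, m3, m4]) hp
  have e2 : P2 ≤ 0 := le_of_mul_le_mul_left (by nlinarith [m1, m3, m4]) hp
  have e3 : P3 ≤ 0 := le_of_mul_le_mul_left (by nlinarith [m1, m2, m4]) hp
  have e4 : P4 ≤ 0 := le_of_mul_le_mul_left (by nlinarith [m1, m2, m3]) hq
  exact ⟨le_antisymm e1 h1, le_antisymm e2 h2, le_antisymm e3 h3, le_antisymm e4 h4⟩

lemma Vb2 : V 0 (φ/Real.sqrt (φ^2+1)) (1/Real.sqrt (φ^2+1)) = -((2 + Real.sqrt 5)/5) := by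
  rw [Vcyc]; exact Vbase

lemma Vb3 : V (1/Real.sqrt (φ^2+1)) 0 (φ/Real.sqrt (φ^2+1)) = -((2 + Real.sqrt 5)/5) := by
  rw [Vcyc]; exact Vb2

set_option maxHeartbeats 1000000 in
/-- A point of the unit sphere satisfies `V = −(2+√5)/5` if and only if it is one of the
12 centres of the spherical pentagons cut out by the six planes
`φ²x² = y²`, `φ²y² = z²`, `φ²z² = x²`. -/
theorem stmt9 (x y z : ℝ) (h : x ^ 2 + y ^ 2 + z ^ 2 = 1) :
    V x y z = -((2 + Real.sqrt 5) / 5) ↔ (x, y, z) ∈ pentagonCentres := by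
  have hp := phi_sq
  have ht := sqrt_t_sq
  have htne : (φ^2+1:ℝ) ≠ 0 := by positivity
  have hφ2pos : (0:ℝ) < φ^2 := by nlinarith [phi_ge]
  have hA : (φ/Real.sqrt (φ^2+1))^2 = φ^2/(φ^2+1) := by rw [div_pow, ht]
  have hB : ((1:ℝ)/Real.sqrt (φ^2+1))^2 = 1/(φ^2+1) := by rw [div_pow, ht, one_pow]
  constructor
  · intro hV
    have hk := key x y z
    rw [h, hV, ← phi_cube] at hk
    have hφ1 : (0:ℝ) < φ - 1 := by linarith [phi_ge]
    have hφ3 : (0:ℝ) < 40*φ + 20 := by linarith [phi_ge]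
    have n1 : 0 ≤ x^2 * (φ^2*x^2 - φ^4*y^2 - z^2)^2 := by positivity
    have n2 : 0 ≤ y^2 * (-x^2 + φ^2*y^2 - φ^4*z^2)^2 := by positivity
    have n3 : 0 ≤ z^2 * (-(φ^4*x^2) - y^2 + φ^2*z^2)^2 := by positivity
    have n4 : 0 ≤ x^2*y^2*z^2 := by positivity
    obtain ⟨t1, t2, t3, t4⟩ :=
      split4 (φ - 1) (40*φ + 20) _ _ _ _ hφ1 hφ3 n1 n2 n3 n4 (by linear_combination -hk)
    simp only [pentagonCentres, Set.mem_insert_iff, Set.mem_singleton_iff, Prod.mk.injEq]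
    have hsplit : x = 0 ∨ y = 0 ∨ z = 0 := by
      rcases mul_eq_zero.1 t4 with h' | h'
      · rcases mul_eq_zero.1 h' with h'' | h''
        · exact Or.inl (sq_eq_zero_iff.1 h'')
        · exact Or.inr (Or.inl (sq_eq_zero_iff.1 h''))
      · exact Or.inr (Or.inr (sq_eq_zero_iff.1 h'))
    rcases hsplit with rfl | rfl | rfl
    · -- x = 0 : points (0, ±A, ±B)
      rcases mul_eq_zero.1 t2 with h1 | h1
      · exfalso
        have hy : y = 0 := sq_eq_zero_iff.1 h1
        subst hy
        have hz2 : z^2 = 1 := by linarith [h]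
        rw [hz2] at t3
        nlinarith [t3, hφ2pos]
      · have e : -(0:ℝ)^2 + φ^2*y^2 - φ^4*z^2 = 0 := sq_eq_zero_iff.1 h1
        have hy2 : y^2 = φ^2*z^2 := by
          apply mul_left_cancel₀ (ne_of_gt hφ2pos); linear_combination e
        have hz2 : z^2 = 1/(φ^2+1) := by
          rw [eq_div_iff htne]; linear_combination h - hy2
        have hzc : (z - 1/Real.sqrt (φ^2+1)) * (z + 1/Real.sqrt (φ^2+1)) = 0 := by
          linear_combination hz2 - hB
        have hyc : (y - φ/Real.sqrt (φ^2+1)) * (y + φ/Real.sqrt (φ^2+1)) = 0 := by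
          linear_combination hy2 + φ^2 * hz2 - hA
        rcases mul_eq_zero.1 hyc with hy | hy <;> rcases mul_eq_zero.1 hzc with hz | hz
        · exact Or.inr (Or.inr (Or.inr (Or.inr (Or.inl ⟨rfl, by linarith, by linarith⟩))))
        · exact Or.inr (Or.inr (Or.inr (Or.inr (Or.inr (Or.inl ⟨rfl, by linarith, by linarith⟩)))))
        · exact Or.inr (Or.inr (Or.inr (Or.inr (Or.inr (Or.inr (Or.inl ⟨rfl, by linarith, by linarith⟩))))))
        · exact Or.inr (Or.inr (Or.inr (Or.inr (Or.inr (Or.inr (Or.inr (Or.inl ⟨rfl, by linarith, by linarith⟩)))))))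
    · -- y = 0 : points (±B, 0, ±A)
      rcases mul_eq_zero.1 t3 with h1 | h1
      · exfalso
        have hz : z = 0 := sq_eq_zero_iff.1 h1
        subst hz
        have hx2 : x^2 = 1 := by linarith [h]
        rw [hx2] at t1
        nlinarith [t1, hφ2pos]
      · have e : -(φ^4*x^2) - (0:ℝ)^2 + φ^2*z^2 = 0 := sq_eq_zero_iff.1 h1
        have hz2 : z^2 = φ^2*x^2 := by
          apply mul_left_cancel₀ (ne_of_gt hφ2pos); linear_combination e
        have hx2 : x^2 = 1/(φ^2+1) := by
          rw [eq_div_iff htne]; linear_combination h - hz2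
        have hxc : (x - 1/Real.sqrt (φ^2+1)) * (x + 1/Real.sqrt (φ^2+1)) = 0 := by
          linear_combination hx2 - hB
        have hzc : (z - φ/Real.sqrt (φ^2+1)) * (z + φ/Real.sqrt (φ^2+1)) = 0 := by
          linear_combination hz2 + φ^2 * hx2 - hA
        rcases mul_eq_zero.1 hxc with hx | hx <;> rcases mul_eq_zero.1 hzc with hz | hz
        · exact Or.inr (Or.inr (Or.inr (Or.inr (Or.inr (Or.inr (Or.inr (Or.inr (Or.inl ⟨by linarith, rfl, by linarith⟩))))))))
        · exact Or.inr (Or.inr (Or.inr (Or.inr (Or.inr (Or.inr (Or.inr (Or.inr (Or.inr (Or.inl ⟨by linarith, rfl, by linarith⟩)))))))))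
        · exact Or.inr (Or.inr (Or.inr (Or.inr (Or.inr (Or.inr (Or.inr (Or.inr (Or.inr (Or.inr (Or.inl ⟨by linarith, rfl, by linarith⟩))))))))))
        · exact Or.inr (Or.inr (Or.inr (Or.inr (Or.inr (Or.inr (Or.inr (Or.inr (Or.inr (Or.inr (Or.inr ⟨by linarith, rfl, by linarith⟩))))))))))
    · -- z = 0 : points (±A, ±B, 0)
      rcases mul_eq_zero.1 t1 with h1 | h1
      · exfalso
        have hx : x = 0 := sq_eq_zero_iff.1 h1
        subst hx
        have hy2 : y^2 = 1 := by linarith [h]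
        rw [hy2] at t2
        nlinarith [t2, hφ2pos]
      · have e : φ^2*x^2 - φ^4*y^2 - (0:ℝ)^2 = 0 := sq_eq_zero_iff.1 h1
        have hx2 : x^2 = φ^2*y^2 := by
          apply mul_left_cancel₀ (ne_of_gt hφ2pos); linear_combination e
        have hy2 : y^2 = 1/(φ^2+1) := by
          rw [eq_div_iff htne]; linear_combination h - hx2
        have hyc : (y - 1/Real.sqrt (φ^2+1)) * (y + 1/Real.sqrt (φ^2+1)) = 0 := by
          linear_combination hy2 - hB
        have hxc : (x - φ/Real.sqrt (φ^2+1)) * (x + φ/Real.sqrt (φ^2+1)) = 0 := by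
          linear_combination hx2 + φ^2 * hy2 - hA
        rcases mul_eq_zero.1 hxc with hx | hx <;> rcases mul_eq_zero.1 hyc with hy | hy
        · exact Or.inl ⟨by linarith, by linarith, rfl⟩
        · exact Or.inr (Or.inl ⟨by linarith, by linarith, rfl⟩)
        · exact Or.inr (Or.inr (Or.inl ⟨by linarith, by linarith, rfl⟩))
        · exact Or.inr (Or.inr (Or.inr (Or.inl ⟨by linarith, by linarith, rfl⟩)))
  · intro hmem
    simp only [pentagonCentres, Set.mem_insert_iff, Set.mem_singleton_iff, Prod.mk.injEq] at hmem
    rcases hmem with ⟨rfl,rfl,rfl⟩|⟨rfl,rfl,rfl⟩|⟨rfl,rfl,rfl⟩|⟨rfl,rfl,rfl⟩|⟨rfl,rfl,rfl⟩|⟨rfl,rfl,rfl⟩|⟨rfl,rfl,rfl⟩|⟨rfl,rfl,rfl⟩|⟨rfl,rfl,rfl⟩|⟨rfl,rfl,rfl⟩|⟨rfl,rfl,rfl⟩|⟨rfl,rfl,rfl⟩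
    · exact Vbase
    · rw [Vneg2]; exact Vbase
    · rw [Vneg1]; exact Vbase
    · rw [Vneg1, Vneg2]; exact Vbase
    · exact Vb2
    · rw [Vneg3]; exact Vb2
    · rw [Vneg2]; exact Vb2
    · rw [Vneg2, Vneg3]; exact Vb2
    · exact Vb3
    · rw [Vneg3]; exact Vb3
    · rw [Vneg1]; exact Vb3
    · rw [Vneg1, Vneg3]; exact Vb3
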